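/- Let L be a finite-dimensional Lie algebra and suppose the chief factors A/B and C/D of L are m-related. Then A/B and C/D are L-connected; in particular, if neither case involves a primitive epimorphic image of type 3 with non-isomorphic minimal ideals, they are L-isomorphic (isomorphic as Lie algebras and as L-modules). -/

import Mathlib

section ChiefFactors

variable (K : Type*) (L : Type*) [Field K] [LieRing L] [LieAlgebra K L]

/-- `A/B` is a chief factor of `L`: `B` is an ideal and `A/B` is a minimal ideal of `L/B`,
i.e. `B < A` and there is no ideal strictly between `B` and `A`. -/
def IsChiefFactor (A B : LieIdeal K L) : Prop :=
  B < A ∧ ∀ C : LieIdeal K L, B < C → C ≤ A → C = A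

/-- The factor `A/B` is abelian. -/
def FactorAbelian (A B : LieIdeal K L) : Prop :=
  ∀ a ∈ A, ∀ a' ∈ A, ⁅a, a'⁆ ∈ B

/-- `M` is a maximal (proper) subalgebra of `L`. -/
def IsMaximalSubalgebra (M : LieSubalgebra K L) : Prop :=
  M ≠ ⊤ ∧ ∀ N : LieSubalgebra K L, M < N → N = ⊤

/-- `L = A + M`. -/
def SumIsTop (A : LieIdeal K L) (M : LieSubalgebra K L) : Prop :=
  ∀ x : L, ∃ a ∈ A, ∃ m ∈ M, x = a + m

/-- `M` supplements the factor `A/B` : `L = A + M` and `B ⊆ A ∩ M`. -/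
def Supplements (M : LieSubalgebra K L) (A B : LieIdeal K L) : Prop :=
  SumIsTop K L A M ∧ B ≤ A ∧ (B : Set L) ⊆ M

/-- `M` complements the factor `A/B` : `L = A + M` and `A ∩ M = B`. -/
def Complements (M : LieSubalgebra K L) (A B : LieIdeal K L) : Prop :=
  SumIsTop K L A M ∧ (A : Set L) ∩ M = B

/-- `A/B` is a supplemented chief factor (supplemented by a maximal subalgebra). -/
def SupplementedFactor (A B : LieIdeal K L) : Prop :=
  ∃ M : LieSubalgebra K L, IsMaximalSubalgebra K L M ∧ Supplements K L M A B

/-- `A/B` is a Frattini chief factor: `A/B ⊆ φ(L/B)`, equivalently `A` is contained in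
every maximal subalgebra of `L` containing `B`. -/
def FrattiniFactor (A B : LieIdeal K L) : Prop :=
  IsChiefFactor K L A B ∧
    ∀ M : LieSubalgebra K L, IsMaximalSubalgebra K L M → (B : Set L) ⊆ M → (A : Set L) ⊆ M

/-- `A/B ↘ C/D` : `A = B + C` and `B ∩ C = D`. -/
def Searrow (A B C D : LieIdeal K L) : Prop := A = B ⊔ C ∧ B ⊓ C = D

/-- `[A/B ↘ C/D]` is an m-crossing. -/
def MCrossing (A B C D : LieIdeal K L) : Prop :=
  IsChiefFactor K L A B ∧ IsChiefFactor K L C D ∧ Searrow K L A B C D ∧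
    FrattiniFactor K L A B ∧ SupplementedFactor K L C D

/-- The chief factors `A/B` and `C/D` are m-related. -/
def MRelated (A B C D : LieIdeal K L) : Prop :=
  (∃ R S, IsChiefFactor K L R S ∧ SupplementedFactor K L R S ∧
     Searrow K L R S A B ∧ Searrow K L R S C D) ∨
  (∃ U V W X, MCrossing K L U V W X ∧ Searrow K L V X A B ∧ Searrow K L W X C D) ∨
  (∃ Y Z, FrattiniFactor K L Y Z ∧ Searrow K L A B Y Z ∧ Searrow K L C D Y Z) ∨
  (∃ U V W X, MCrossing K L U V W X ∧ Searrow K L A B U V ∧ Searrow K L C D U W)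

/-- `I` is the core `M_L` of the subalgebra `M`: the largest ideal of `L` contained in `M`. -/
def IsCoreOf (I : LieIdeal K L) (M : LieSubalgebra K L) : Prop :=
  (I : Set L) ⊆ M ∧ ∀ J : LieIdeal K L, (J : Set L) ⊆ M → J ≤ I

/-- The quotient `L/I` is primitive: it has a core-free maximal subalgebra. -/
def QuotPrimitive (I : LieIdeal K L) : Prop :=
  ∃ M : LieSubalgebra K L, IsMaximalSubalgebra K L M ∧ IsCoreOf K L I M

/-- The quotient `L/I` is monolithic: it has a unique minimal ideal. -/
def QuotMonolithic (I : LieIdeal K L) : Prop :=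
  ∃! J : LieIdeal K L, IsChiefFactor K L J I

/-- `M` is a monolithic maximal subalgebra supplementing `A/B` :
`L/M_L` is a monolithic primitive Lie algebra. -/
def MonolithicSupplement (M : LieSubalgebra K L) (A B : LieIdeal K L) : Prop :=
  IsMaximalSubalgebra K L M ∧ Supplements K L M A B ∧
    ∃ I : LieIdeal K L, IsCoreOf K L I M ∧ QuotMonolithic K L I

/-- `A/B` and `C/D` are `L`-isomorphic: there is an isomorphism of `L`-modules between
the factors which moreover preserves the induced Lie brackets. -/
def LIso (A B C D : LieIdeal K L) : Prop :=
  B ≤ A ∧ D ≤ C ∧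
  ∃ e : (A ⧸ (LieSubmodule.comap (LieSubmodule.incl A) B)) ≃ₗ⁅K,L⁆
        (C ⧸ (LieSubmodule.comap (LieSubmodule.incl C) D)),
    ∀ (a a' : A) (c c' : C),
      e (LieSubmodule.Quotient.mk a) = LieSubmodule.Quotient.mk c →
      e (LieSubmodule.Quotient.mk a') = LieSubmodule.Quotient.mk c' →
      e (LieSubmodule.Quotient.mk ⟨⁅(a : L), (a' : L)⁆, A.lie_mem a'.2⟩) =
        LieSubmodule.Quotient.mk ⟨⁅(c : L), (c' : L)⁆, C.lie_mem c'.2⟩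

/-- `L/I` is a primitive Lie algebra of type 3 with (exactly two) minimal ideals
`J1/I` and `J2/I`, both non-abelian. -/
def QuotPrimitiveType3 (I J1 J2 : LieIdeal K L) : Prop :=
  QuotPrimitive K L I ∧ J1 ≠ J2 ∧ IsChiefFactor K L J1 I ∧ IsChiefFactor K L J2 I ∧
    ¬ FactorAbelian K L J1 I ∧ ¬ FactorAbelian K L J2 I ∧
    ∀ J : LieIdeal K L, IsChiefFactor K L J I → J = J1 ∨ J = J2

/-- `A/B` and `C/D` are `L`-connected. -/
def LConnected (A B C D : LieIdeal K L) : Prop :=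
  LIso K L A B C D ∨
    ∃ I J1 J2 : LieIdeal K L, QuotPrimitiveType3 K L I J1 J2 ∧
      LIso K L J1 I A B ∧ LIso K L J2 I C D

end ChiefFactors

/-!
Lattice-theoretically, `A/B ↘ C/D` is a diamond in the modular lattice of ideals, so the second
isomorphism theorem makes `C/D` and `A/B` `L`-isomorphic and one is a chief factor iff the other
is. This settles cases (1) and (3) and reduces (2) and (4) to an m-crossing `[U/V ↘ W/X]` with
`V/X` chief. Let `M` be a maximal subalgebra supplementing `W/X` and `R` its core. Neither `W`
nor `V` lies in `M` (for `V` because `U/V` is Frattini), so `V/X ≅ (R + V)/R` and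
`W/X ≅ (R + W)/R` are minimal ideals of the primitive algebra `L/R`. If they differ, `L = P + M`
for each minimal ideal `P/R` forces the centralizer of one to be the other; hence both are
non-abelian and there is no third one, i.e. `L/R` is primitive of type 3.
-/

section QuotientEquiv

variable {R L M M' : Type*} [CommRing R] [LieRing L] [LieAlgebra R L]
  [AddCommGroup M] [Module R M] [LieRingModule L M] [LieModule R L M]
  [AddCommGroup M'] [Module R M'] [LieRingModule L M']

noncomputable def LieModuleHom.quotientEquivOfSurjective (f : M →ₗ⁅R,L⁆ M')
    (N : LieSubmodule R L M) (hN : N.toSubmodule = LinearMap.ker (f : M →ₗ[R] M'))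
    (hf : Function.Surjective f) : (M ⧸ N) ≃ₗ⁅R,L⁆ M' :=
  { LinearEquiv.ofBijective (N.toSubmodule.liftQ (f : M →ₗ[R] M') hN.le)
      ⟨LinearMap.ker_eq_bot.1 (Submodule.ker_liftQ_eq_bot' N.toSubmodule (f : M →ₗ[R] M') hN),
        LinearMap.range_eq_top.1 (by
          rw [Submodule.range_liftQ]; exact LinearMap.range_eq_top.2 hf)⟩ with
    map_lie' := by
      intro x m
      obtain ⟨m, rfl⟩ := LieSubmodule.Quotient.surjective_mk' N m
      have hmk : ⁅x, LieSubmodule.Quotient.mk' N m⁆ = LieSubmodule.Quotient.mk' N ⁅x, m⁆ :=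
        ((LieSubmodule.Quotient.mk' N).map_lie x m).symm
      rw [hmk]
      exact f.map_lie x m }

end QuotientEquiv

section MRelated

variable {K : Type*} {L : Type*} [Field K] [LieRing L] [LieAlgebra K L]

lemma lie_sub_lie_mem {I : LieIdeal K L} {a a' c c' : L} (h : a - c ∈ I) (h' : a' - c' ∈ I) :
    ⁅a, a'⁆ - ⁅c, c'⁆ ∈ I := by
  have : ⁅a, a'⁆ - ⁅c, c'⁆ = ⁅a - c, a'⁆ + ⁅c, a' - c'⁆ := by
    rw [sub_lie, lie_sub]; abel
  rw [this]
  exact I.add_mem (lie_mem_left K L I _ _ h) (lie_mem_right K L I _ _ h')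

lemma isChiefFactor_iff_covBy {A B : LieIdeal K L} : IsChiefFactor K L A B ↔ B ⋖ A :=
  and_congr_right fun _ =>
    ⟨fun h C hBC hCA => hCA.ne (h C hBC hCA.le), fun h _ hBC hCA => hCA.eq_of_not_lt (h hBC)⟩

lemma isChiefFactor_sup_iff {Q S : LieIdeal K L} :
    IsChiefFactor K L (Q ⊔ S) Q ↔ IsChiefFactor K L S (Q ⊓ S) := by
  simp only [isChiefFactor_iff_covBy]
  exact ⟨inf_covBy_of_covBy_sup_left, covBy_sup_of_inf_covBy_right⟩

lemma Searrow.isChiefFactor_iff {P Q S T : LieIdeal K L} (h : Searrow K L P Q S T) :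
    IsChiefFactor K L P Q ↔ IsChiefFactor K L S T := by
  obtain ⟨rfl, rfl⟩ := h
  exact isChiefFactor_sup_iff

lemma Searrow.comm {P Q S T : LieIdeal K L} (h : Searrow K L P Q S T) : Searrow K L P S Q T :=
  ⟨h.1.trans (sup_comm Q S), (inf_comm S Q).trans h.2⟩

lemma mk_eq_mk_iff_sub_mem {A B : LieIdeal K L} {a c : A} :
    (LieSubmodule.Quotient.mk a : A ⧸ LieSubmodule.comap (LieSubmodule.incl A) B) =
      LieSubmodule.Quotient.mk c ↔ (a : L) - c ∈ B :=
  Submodule.Quotient.eq _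

lemma LIso.refl {A B : LieIdeal K L} (h : B ≤ A) : LIso K L A B A B := by
  refine ⟨h, h, LieModuleEquiv.refl, fun a a' c c' hc hc' => ?_⟩
  simp only [LieModuleEquiv.refl_apply, mk_eq_mk_iff_sub_mem] at hc hc' ⊢
  exact lie_sub_lie_mem hc hc'

lemma LIso.symm {A B C D : LieIdeal K L} (h : LIso K L A B C D) : LIso K L C D A B := by
  obtain ⟨hBA, hDC, e, he⟩ := h
  refine ⟨hDC, hBA, e.symm, fun c c' a a' ha ha' => ?_⟩
  rw [LieModuleEquiv.symm_apply_eq] at ha ha' ⊢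
  exact (he a a' c c' ha.symm ha'.symm).symm

lemma LIso.trans {A B C D E F : LieIdeal K L} (h : LIso K L A B C D) (h' : LIso K L C D E F) :
    LIso K L A B E F := by
  obtain ⟨hBA, -, e, he⟩ := h
  obtain ⟨-, hFE, e', he'⟩ := h'
  refine ⟨hBA, hFE, e.trans e', fun a a' x x' hx hx' => ?_⟩
  obtain ⟨c, hc⟩ := LieSubmodule.Quotient.surjective_mk' _ (e (LieSubmodule.Quotient.mk a))
  obtain ⟨c', hc'⟩ := LieSubmodule.Quotient.surjective_mk' _ (e (LieSubmodule.Quotient.mk a'))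
  rw [LieModuleEquiv.trans_apply] at hx hx' ⊢
  rw [← hc] at hx
  rw [← hc'] at hx'
  rw [he a a' c c' hc.symm hc'.symm, he' c c' x x' hx hx']

lemma lIso_inf_sup (Q S : LieIdeal K L) : LIso K L S (Q ⊓ S) (Q ⊔ S) Q := by
  let f : S →ₗ⁅K,L⁆ (Q ⊔ S : LieIdeal K L) ⧸ LieSubmodule.comap (LieSubmodule.incl (Q ⊔ S)) Q :=
    (LieSubmodule.Quotient.mk' _).comp (LieSubmodule.inclusion le_sup_right)
  have hker : (LieSubmodule.comap (LieSubmodule.incl S) (Q ⊓ S)).toSubmodule =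
      LinearMap.ker f.toLinearMap := by
    ext s
    rw [LinearMap.mem_ker, LieModuleHom.coe_toLinearMap, LieModuleHom.comp_apply,
      LieSubmodule.Quotient.mk_eq_zero]
    exact ⟨And.left, fun h => ⟨h, s.2⟩⟩
  have hsurj : Function.Surjective f := by
    intro y
    obtain ⟨p, rfl⟩ := LieSubmodule.Quotient.surjective_mk' _ y
    obtain ⟨q, hq, s, hs, hp⟩ := (LieSubmodule.mem_sup _ _ _).1 p.2
    refine ⟨⟨s, hs⟩, mk_eq_mk_iff_sub_mem.2 ?_⟩
    change s - (p : L) ∈ Q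
    rw [← hp, sub_add_cancel_right]
    exact Q.neg_mem hq
  refine ⟨inf_le_right, le_sup_left, f.quotientEquivOfSurjective _ hker hsurj,
    fun a a' c c' hc hc' => mk_eq_mk_iff_sub_mem.2 ?_⟩
  exact lie_sub_lie_mem (mk_eq_mk_iff_sub_mem.1 hc) (mk_eq_mk_iff_sub_mem.1 hc')

lemma Searrow.lIso {P Q S T : LieIdeal K L} (h : Searrow K L P Q S T) : LIso K L S T P Q := by
  obtain ⟨rfl, rfl⟩ := h
  exact lIso_inf_sup Q S

def LieIdeal.addSubalgebra (N : LieIdeal K L) (M : LieSubalgebra K L) : LieSubalgebra K L :=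
  { N.toSubmodule ⊔ M.toSubmodule with
    lie_mem' := by
      intro x y hx hy
      obtain ⟨a, ha, m, hm, rfl⟩ := Submodule.mem_sup.1 hx
      obtain ⟨a', ha', m', hm', rfl⟩ := Submodule.mem_sup.1 hy
      rw [add_lie, lie_add m, ← add_assoc]
      exact Submodule.add_mem _
        (Submodule.mem_sup_left
          (N.add_mem (lie_mem_left K L N _ _ ha) (lie_mem_right K L N _ _ ha')))
        (Submodule.mem_sup_right (M.lie_mem hm hm')) }

lemma sumIsTop_iff_not_subset {N : LieIdeal K L} {M : LieSubalgebra K L}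
    (hM : IsMaximalSubalgebra K L M) : SumIsTop K L N M ↔ ¬ (N : Set L) ⊆ M := by
  refine ⟨fun h hNM => hM.1 (eq_top_iff.2 fun x _ => ?_), fun h x => ?_⟩
  · obtain ⟨a, ha, m, hm, rfl⟩ := h x
    exact M.add_mem (hNM ha) hm
  · obtain ⟨n, hn, hnM⟩ := Set.not_subset.1 h
    have htop : N.addSubalgebra M = ⊤ :=
      hM.2 _ (SetLike.lt_iff_le_and_exists.2
        ⟨fun _ hm => Submodule.mem_sup_right hm, n, Submodule.mem_sup_left hn, hnM⟩)
    obtain ⟨a, ha, m, hm, hx⟩ := Submodule.mem_sup.1 (htop ▸ LieSubalgebra.mem_top x :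
      x ∈ N.addSubalgebra M)
    exact ⟨a, ha, m, hm, hx.symm⟩

lemma exists_isCoreOf (M : LieSubalgebra K L) : ∃ R : LieIdeal K L, IsCoreOf K L R M := by
  refine ⟨sSup {J | (J : Set L) ⊆ M}, fun x hx => ?_, fun J hJ => le_sSup hJ⟩
  have hle : (sSup {J : LieIdeal K L | (J : Set L) ⊆ M}).toSubmodule ≤ M.toSubmodule := by
    rw [LieSubmodule.sSup_toSubmodule]
    exact sSup_le fun _ ⟨J, hJ, hJp⟩ => hJp ▸ hJ
  exact hle hx

lemma inf_eq_of_isChiefFactor {R P₁ P₂ : LieIdeal K L} (h₁ : IsChiefFactor K L P₁ R)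
    (h₂ : IsChiefFactor K L P₂ R) (hne : P₁ ≠ P₂) : P₁ ⊓ P₂ = R := by
  refine ((isChiefFactor_iff_covBy.1 h₁).eq_or_eq (le_inf h₁.1.le h₂.1.le)
    inf_le_left).resolve_right fun h => ?_
  rcases (isChiefFactor_iff_covBy.1 h₂).eq_or_eq h₁.1.le (inf_eq_left.1 h) with h' | h'
  exacts [h₁.1.ne' h', hne h']

lemma not_subset_of_isCoreOf {M : LieSubalgebra K L} {R P : LieIdeal K L}
    (hR : IsCoreOf K L R M) (hP : IsChiefFactor K L P R) : ¬ (P : Set L) ⊆ M :=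
  fun hPM => hP.1.not_ge (hR.2 P hPM)

lemma mem_ker_quotient_iff {P R : LieIdeal K L} {x : L} :
    x ∈ LieModule.ker K L (P ⧸ LieSubmodule.comap (LieSubmodule.incl P) R) ↔
      ∀ p ∈ P, ⁅x, p⁆ ∈ R := by
  rw [LieModule.mem_ker]
  refine ⟨fun h p hp => ?_, fun h m => ?_⟩
  · have := h (LieSubmodule.Quotient.mk' _ ⟨p, hp⟩)
    rwa [← LieModuleHom.map_lie, LieSubmodule.Quotient.mk_eq_zero] at this
  · obtain ⟨⟨p, hp⟩, rfl⟩ := LieSubmodule.Quotient.surjective_mk' _ m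
    rw [← LieModuleHom.map_lie, LieSubmodule.Quotient.mk_eq_zero]
    exact h p hp

lemma mem_core_of_lie_mem_core {M : LieSubalgebra K L} {R P I : LieIdeal K L}
    (hR : IsCoreOf K L R M) (hP : SumIsTop K L P M) (hPI : ∀ p ∈ P, ∀ y ∈ I, ⁅p, y⁆ ∈ R)
    {y : L} (hyI : y ∈ I) (hyM : y ∈ M) : y ∈ R := by
  let J : LieIdeal K L :=
    { toSubmodule := I.toSubmodule ⊓ M.toSubmodule
      lie_mem := by
        intro x z hz
        obtain ⟨a, ha, m, hm, rfl⟩ := hP x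
        rw [add_lie]
        exact Submodule.add_mem _ ⟨lie_mem_right K L I _ _ hz.1, hR.1 (hPI a ha z hz.1)⟩
          ⟨lie_mem_right K L I _ _ hz.1, M.lie_mem hm hz.2⟩ }
  exact hR.2 J (fun _ hz => hz.2) ⟨hyI, hyM⟩

lemma ker_quotient_eq_of_isCoreOf {M : LieSubalgebra K L} {R P₁ P₂ : LieIdeal K L}
    (hM : IsMaximalSubalgebra K L M) (hR : IsCoreOf K L R M) (h₁ : IsChiefFactor K L P₁ R)
    (h₂ : IsChiefFactor K L P₂ R) (hne : P₁ ≠ P₂) :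
    LieModule.ker K L (P₁ ⧸ LieSubmodule.comap (LieSubmodule.incl P₁) R) = P₂ := by
  set C := LieModule.ker K L (P₁ ⧸ LieSubmodule.comap (LieSubmodule.incl P₁) R)
  have hsum : ∀ {P}, IsChiefFactor K L P R → SumIsTop K L P M := fun hP =>
    (sumIsTop_iff_not_subset hM).2 (not_subset_of_isCoreOf hR hP)
  have hP₂C : P₂ ≤ C := fun y hy => mem_ker_quotient_iff.2 fun p hp =>
    inf_eq_of_isChiefFactor h₁ h₂ hne ▸ ⟨lie_mem_right K L P₁ _ _ hp, lie_mem_left K L P₂ _ _ hy⟩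
  have hCM : ∀ y ∈ C, y ∈ M → y ∈ R := fun y hy =>
    mem_core_of_lie_mem_core hR (hsum h₁) (fun p hp y hy => by
      rw [← lie_skew]; exact R.neg_mem (mem_ker_quotient_iff.1 hy p hp)) hy
  refine le_antisymm (fun c hc => ?_) hP₂C
  obtain ⟨a, ha, m, hm, rfl⟩ := hsum h₂ c
  have hmC : m ∈ C := by simpa using C.sub_mem hc (hP₂C ha)
  exact P₂.add_mem ha (h₂.1.le (hCM m hmC hm))

lemma quotPrimitiveType3_of_isCoreOf {M : LieSubalgebra K L} {R P₁ P₂ : LieIdeal K L}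
    (hM : IsMaximalSubalgebra K L M) (hR : IsCoreOf K L R M) (h₁ : IsChiefFactor K L P₁ R)
    (h₂ : IsChiefFactor K L P₂ R) (hne : P₁ ≠ P₂) : QuotPrimitiveType3 K L R P₁ P₂ := by
  have hnonab : ∀ {P P' : LieIdeal K L}, IsChiefFactor K L P R → IsChiefFactor K L P' R →
      P ≠ P' → ¬ FactorAbelian K L P R := fun {P P'} hP hP' hne hab => by
    have hPP' : P ≤ P' := ker_quotient_eq_of_isCoreOf hM hR hP hP' hne ▸
      fun p hp => mem_ker_quotient_iff.2 (hab p hp)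
    exact hne (hP'.2 _ hP.1 hPP')
  refine ⟨⟨M, hM, hR⟩, hne, h₁, h₂, hnonab h₁ h₂ hne, hnonab h₂ h₁ hne.symm, fun J hJ => ?_⟩
  by_cases hJ₁ : J = P₁
  · exact .inl hJ₁
  · exact .inr ((ker_quotient_eq_of_isCoreOf hM hR h₁ hJ (Ne.symm hJ₁)).symm.trans
      (ker_quotient_eq_of_isCoreOf hM hR h₁ h₂ hne))

lemma QuotPrimitiveType3.swap {I J₁ J₂ : LieIdeal K L} (h : QuotPrimitiveType3 K L I J₁ J₂) :
    QuotPrimitiveType3 K L I J₂ J₁ := by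
  obtain ⟨hI, hne, h₁, h₂, hn₁, hn₂, hJ⟩ := h
  exact ⟨hI, hne.symm, h₂, h₁, hn₂, hn₁, fun J hJ' => (hJ J hJ').symm⟩

lemma LConnected.symm {A B C D : LieIdeal K L} (h : LConnected K L A B C D) :
    LConnected K L C D A B := by
  rcases h with h | ⟨I, J₁, J₂, h₃, h₁, h₂⟩
  exacts [.inl h.symm, .inr ⟨I, J₂, J₁, h₃.swap, h₂, h₁⟩]

lemma LConnected.of_lIso {A B C D A' B' C' D' : LieIdeal K L} (h : LConnected K L A B C D)
    (hA : LIso K L A' B' A B) (hC : LIso K L C D C' D') : LConnected K L A' B' C' D' := by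
  rcases h with h | ⟨I, J₁, J₂, h₃, h₁, h₂⟩
  exacts [.inl (hA.trans (h.trans hC)), .inr ⟨I, J₁, J₂, h₃, h₁.trans hA.symm, h₂.trans hC⟩]

lemma lConnected_of_isCoreOf {M : LieSubalgebra K L} {R P₁ P₂ : LieIdeal K L}
    (hM : IsMaximalSubalgebra K L M) (hR : IsCoreOf K L R M) (h₁ : IsChiefFactor K L P₁ R)
    (h₂ : IsChiefFactor K L P₂ R) : LConnected K L P₁ R P₂ R := by
  by_cases hne : P₁ = P₂
  · exact .inl (hne ▸ LIso.refl h₁.1.le)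
  · exact .inr ⟨R, P₁, P₂, quotPrimitiveType3_of_isCoreOf hM hR h₁ h₂ hne,
      LIso.refl h₁.1.le, LIso.refl h₂.1.le⟩

lemma inf_eq_of_isCoreOf {M : LieSubalgebra K L} {R V X : LieIdeal K L}
    (hR : IsCoreOf K L R M) (hXR : X ≤ R) (hVX : IsChiefFactor K L V X)
    (hV : ¬ (V : Set L) ⊆ M) : R ⊓ V = X :=
  ((isChiefFactor_iff_covBy.1 hVX).eq_or_eq (le_inf hXR hVX.1.le) inf_le_right).resolve_right
    fun h => hV fun _ hv => hR.1 (inf_eq_right.1 h hv)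

lemma MCrossing.lConnected {U V W X : LieIdeal K L} (h : MCrossing K L U V W X)
    (hVX : IsChiefFactor K L V X) : LConnected K L V X W X := by
  obtain ⟨-, hWX, ⟨hU, -⟩, hUV, M, hM, hWM, -, hXM⟩ := h
  obtain ⟨R, hR⟩ := exists_isCoreOf M
  have hXR : X ≤ R := hR.2 X hXM
  have hW : ¬ (W : Set L) ⊆ M := (sumIsTop_iff_not_subset hM).1 hWM
  have hV : ¬ (V : Set L) ⊆ M := fun hVM =>
    hW fun _ hw => hUV.2 M hM hVM (hU ▸ LieSubmodule.mem_sup_right hw)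
  have hRV : Searrow K L (R ⊔ V) R V X := ⟨rfl, inf_eq_of_isCoreOf hR hXR hVX hV⟩
  have hRW : Searrow K L (R ⊔ W) R W X := ⟨rfl, inf_eq_of_isCoreOf hR hXR hWX hW⟩
  exact (lConnected_of_isCoreOf hM hR (hRV.isChiefFactor_iff.2 hVX)
    (hRW.isChiefFactor_iff.2 hWX)).of_lIso hRV.lIso hRW.lIso.symm

end MRelated

variable {K : Type*} {L : Type*} [Field K] [LieRing L] [LieAlgebra K L]
variable [FiniteDimensional K L]

theorem stmt13 (A B C D : LieIdeal K L)
    (hAB : IsChiefFactor K L A B) (hCD : IsChiefFactor K L C D)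
    (hrel : MRelated K L A B C D) :
    LConnected K L A B C D := by
  rcases hrel with ⟨R, S, -, -, hA, hC⟩ | ⟨U, V, W, X, hcross, hA, hC⟩ | ⟨Y, Z, -, hA, hC⟩ |
    ⟨U, V, W, X, hcross, hA, hC⟩
  · exact .inl (hA.lIso.trans hC.lIso.symm)
  · exact (hcross.lConnected (hA.isChiefFactor_iff.2 hAB)).of_lIso hA.lIso hC.lIso.symm
  · exact .inl (hA.lIso.symm.trans hC.lIso)
  · have hUVWX : Searrow K L U V W X := hcross.2.2.1
    have hVX : IsChiefFactor K L V X :=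
      hUVWX.comm.isChiefFactor_iff.1 (hC.isChiefFactor_iff.1 hCD)
    exact ((hcross.lConnected hVX).symm.of_lIso hUVWX.lIso.symm hUVWX.comm.lIso).of_lIso
      hA.lIso.symm hC.lIso
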